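/- The boundary-path space is invariant under the shift: if x is a boundary path and m ∈ ℕ^k with m ≤ d(x), then σ^m x is a boundary path. -/

import Mathlib

open CategoryTheory

/-- A `k`-graph: a small category `Λ` together with a degree functor
`d : Λ → ℕ^k` satisfying the unique factorization property.
Morphisms point from range to source, so juxtaposition `λμ` of paths
corresponds to `λ ≫ μ`. -/
structure KGraph (k : ℕ) where
  Obj : Type
  [cat : Category Obj]
  d : ∀ {a b : Obj}, (a ⟶ b) → (Fin k → ℕ)
  d_id : ∀ a : Obj, d (𝟙 a) = 0
  d_comp : ∀ {a b c : Obj} (f : a ⟶ b) (g : b ⟶ c), d (f ≫ g) = d f + d g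
  factor : ∀ {a b : Obj} (l : a ⟶ b) (m n : Fin k → ℕ), d l = m + n →
      ∃! fac : Σ c : Obj, (a ⟶ c) × (c ⟶ b),
        d fac.2.1 = m ∧ d fac.2.2 = n ∧ fac.2.1 ≫ fac.2.2 = l

attribute [instance] KGraph.cat

/-- An element of the path space `X_Λ` of a `k`-graph `G`: a graph morphism
`x : Ω_{k,m} → G` of degree `m = deg ∈ (ℕ ∪ {∞})^k`, recorded by its vertices
`x(p)` and its segments `x(p,q) : x(p) ⟶ x(q)` for `p ≤ q ≤ m`. -/
structure KPath {k : ℕ} (G : KGraph k) where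
  deg : Fin k → ℕ∞
  vertex : ∀ p : Fin k → ℕ, (∀ i, (p i : ℕ∞) ≤ deg i) → G.Obj
  seg : ∀ (p q : Fin k → ℕ) (hpq : p ≤ q) (hq : ∀ i, (q i : ℕ∞) ≤ deg i),
      vertex p (fun i => le_trans (Nat.cast_le.mpr (hpq i)) (hq i)) ⟶ vertex q hq
  seg_deg : ∀ (p q : Fin k → ℕ) (hpq : p ≤ q) (hq : ∀ i, (q i : ℕ∞) ≤ deg i),
      G.d (seg p q hpq hq) = q - p
  seg_self : ∀ (p : Fin k → ℕ) (hp : ∀ i, (p i : ℕ∞) ≤ deg i),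
      seg p p le_rfl hp = 𝟙 (vertex p hp)
  seg_comp : ∀ (p q r : Fin k → ℕ) (hpq : p ≤ q) (hqr : q ≤ r)
      (hr : ∀ i, (r i : ℕ∞) ≤ deg i),
      seg p q hpq (fun i => le_trans (Nat.cast_le.mpr (hqr i)) (hr i)) ≫ seg q r hqr hr
        = seg p r (le_trans hpq hqr) hr

/-- The shift map `σ^m` on the path space: `d(σ^m x) = d(x) − m` and
`(σ^m x)(p,q) = x(m+p, m+q)`. -/
def KPath.shift {k : ℕ} {G : KGraph k} (x : KPath G) (m : Fin k → ℕ)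
    (hm : ∀ i, (m i : ℕ∞) ≤ x.deg i) : KPath G where
  deg := fun i => x.deg i - m i
  vertex p hp := x.vertex (m + p) (fun i => by
    simp only [Pi.add_apply, Nat.cast_add]
    exact add_le_of_le_tsub_left_of_le (hm i) (hp i))
  seg p q hpq hq := x.seg (m + p) (m + q) (add_le_add le_rfl hpq) (fun i => by
    simp only [Pi.add_apply, Nat.cast_add]
    exact add_le_of_le_tsub_left_of_le (hm i) (hq i))
  seg_deg p q hpq hq := by
    rw [x.seg_deg]
    funext i
    simp only [Pi.sub_apply, Pi.add_apply]
    omega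
  seg_self p hp := x.seg_self (m + p) _
  seg_comp p q r hpq hqr hr :=
    x.seg_comp (m + p) (m + q) (m + r) (add_le_add le_rfl hpq)
      (add_le_add le_rfl hqr) _

/-- The total space of morphisms (paths) of a `k`-graph. -/
def MorT {k : ℕ} (G : KGraph k) : Type := Σ a b : G.Obj, a ⟶ b

/-- A topological `k`-graph: a `k`-graph whose object and morphism spaces
carry topologies for which the range and source maps are continuous. -/
structure TopKGraph (k : ℕ) extends KGraph k where
  [topObj : TopologicalSpace toKGraph.Obj]
  [topMor : TopologicalSpace (MorT toKGraph)]
  r_cont : Continuous fun f : MorT toKGraph => f.1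
  s_cont : Continuous fun f : MorT toKGraph => f.2.1

attribute [instance] TopKGraph.topObj TopKGraph.topMor

/-- `λ` and `μ` have a minimal common extension:
`Λ^min(λ, μ) ≠ ∅`, i.e. there are `α`, `β` with `λα = μβ` and
`d(λα) = d(λ) ∨ d(μ)` (this forces `r(λ) = r(μ)`). -/
def HasMCE {k : ℕ} (G : KGraph k) (f g : MorT G) : Prop :=
  ∃ (h : g.1 = f.1) (c : G.Obj) (α : f.2.1 ⟶ c) (β : g.2.1 ⟶ c),
    f.2.2 ≫ α = CategoryTheory.eqToHom h.symm ≫ g.2.2 ≫ β ∧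
    G.d (f.2.2 ≫ α) = G.d f.2.2 ⊔ G.d g.2.2

/-- `E ⊆ VΛ` is exhaustive for `V`: every `λ ∈ VΛ` admits `μ ∈ E` with
`Λ^min(λ,μ) ≠ ∅`. -/
def Exhaustive {k : ℕ} (G : KGraph k) (E : Set (MorT G)) (V : Set G.Obj) :
    Prop :=
  (∀ g ∈ E, g.1 ∈ V) ∧ ∀ f : MorT G, f.1 ∈ V → ∃ g ∈ E, HasMCE G f g

/-- `v·CE(Λ)`: the collection of compact sets `E ⊆ Λ` such that `r(E)` is a
neighbourhood of `v` and `E` is exhaustive for `r(E)`. -/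
def CE {k : ℕ} (G : TopKGraph k) (v : G.Obj) :
    Set (Set (MorT G.toKGraph)) :=
  {E | IsCompact E ∧ (Sigma.fst '' E) ∈ nhds v ∧
    Exhaustive G.toKGraph E (Sigma.fst '' E)}

/-- `x` is a boundary path: for every `n ≤ d(x)` and every
`E ∈ x(n)·CE(Λ)` there is `λ ∈ E` with `x(n, n + d(λ)) = λ`. -/
def IsBoundary {k : ℕ} (G : TopKGraph k) (x : KPath G.toKGraph) : Prop :=
  ∀ (n : Fin k → ℕ) (hn : ∀ i, (n i : ℕ∞) ≤ x.deg i)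
    (E : Set (MorT G.toKGraph)), E ∈ CE G (x.vertex n hn) →
    ∃ g ∈ E, ∃ (_ : g.1 = x.vertex n hn)
      (h2 : ∀ i, (((n + G.toKGraph.d g.2.2) i : ℕ) : ℕ∞) ≤ x.deg i),
      HEq (x.seg n (n + G.toKGraph.d g.2.2) le_self_add h2) g.2.2

namespace KPath

variable {k : ℕ} {G : KGraph k}

theorem le_shift_deg_iff (x : KPath G) {m : Fin k → ℕ} (hm : ∀ i, (m i : ℕ∞) ≤ x.deg i)
    (n : Fin k → ℕ) :
    (∀ i, (n i : ℕ∞) ≤ (x.shift m hm).deg i) ↔ ∀ i, ((m + n) i : ℕ∞) ≤ x.deg i :=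
  forall_congr' fun i => by
    rw [Pi.add_apply, Nat.cast_add]
    exact (ENat.addLECancellable_natCast (m i)).le_tsub_iff_left (hm i)

theorem seg_heq_of_eq (x : KPath G) {p p' q q' : Fin k → ℕ} (hp : p = p') (hq : q = q')
    (hpq : p ≤ q) (hq_le : ∀ i, (q i : ℕ∞) ≤ x.deg i)
    (hpq' : p' ≤ q') (hq'_le : ∀ i, (q' i : ℕ∞) ≤ x.deg i) :
    HEq (x.seg p q hpq hq_le) (x.seg p' q' hpq' hq'_le) := by
  subst hp hq
  rfl

end KPath

/- The boundary condition for `σ^m x` at `n` is the boundary condition for `x` at `m + n`: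
the vertices `(σ^m x)(n) = x(m + n)` agree, and `(σ^m x)(n, n + d(λ)) = x(m + n, m + n + d(λ))`. -/
/-- the boundary-path space is invariant under the shift maps:
if `x` is a boundary path and `m ≤ d(x)` then `σ^m x` is a boundary path. -/
theorem isBoundary_shift {k : ℕ} (G : TopKGraph k) (x : KPath G.toKGraph)
    (hb : IsBoundary G x) (m : Fin k → ℕ)
    (hm : ∀ i, (m i : ℕ∞) ≤ x.deg i) :
    IsBoundary G (x.shift m hm) := by
  intro n hn E hE
  obtain ⟨g, hgE, hg_range, hg_le, hg_seg⟩ :=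
    hb (m + n) ((x.le_shift_deg_iff hm n).mp hn) E hE
  have hg_le' : ∀ i, ((n + G.d g.2.2) i : ℕ∞) ≤ (x.shift m hm).deg i :=
    (x.le_shift_deg_iff hm _).mpr (by rwa [← add_assoc])
  exact ⟨g, hgE, hg_range, hg_le',
    (x.seg_heq_of_eq rfl (add_assoc m n _).symm _ _ _ _).trans hg_seg⟩
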